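/- Let (X, ν) be a probability space, q > 1 a real number, and g : X → [0, N] a measurable function (N ≥ 0 real). Suppose there are constants c, C > 0 and D ≥ 0 such that ν{x : g(x) ≥ t} ≤ C·q^{-t} for all t ≥ 0, and ν{x : g(x) ≥ t} ≥ c·q^{-t} for all 0 ≤ t ≤ N − D. Then there exist constants c', C' > 0 depending only on c, C, D, q such that c'·(N+1) ≤ ∫_X q^{g(x)} dν(x) ≤ C'·(N+1). -/

import Mathlib

/-!
By the layer cake formula, `∫ q ^ g dν = 1 + log q * ∫₀^N q ^ t * ν {g ≥ t} dt`. The upper tail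
bound makes the integrand at most `C * log q` on `(0, N]`, and the lower one makes it at least
`c * log q` on `(0, N - D]`, so the integral lies between `1 + c log q (N - D)` and
`1 + C log q N`; both are comparable to `N + 1` with constants depending on `c, C, D, q` only.
-/

open MeasureTheory Set Real

lemma integral_rpow_mul_log {q : ℝ} (hq : 0 < q) (b : ℝ) :
    ∫ t in 0..b, q ^ t * log q = q ^ b - 1 := by
  rw [intervalIntegral.integral_eq_sub_of_hasDerivAt
    (fun t _ => (hasStrictDerivAt_const_rpow hq t).hasDerivAt)
    (Continuous.intervalIntegrable (by fun_prop (disch := positivity)) _ _), rpow_zero]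

section LayerCake

variable {α : Type*} [MeasurableSpace α] {μ : Measure α} {f : α → ℝ} {q : ℝ}

lemma lintegral_ofReal_rpow_sub_one (hq : 1 ≤ q) (hf_nn : 0 ≤ᵐ[μ] f) (hf : AEMeasurable f μ) :
    ∫⁻ x, ENNReal.ofReal (q ^ f x - 1) ∂μ
      = ∫⁻ t in Ioi 0, μ {x | t ≤ f x} * ENNReal.ofReal (q ^ t * log q) := by
  have hq0 : 0 < q := zero_lt_one.trans_le hq
  simp_rw [← integral_rpow_mul_log hq0]
  exact lintegral_comp_eq_lintegral_meas_le_mul μ hf_nn hf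
    (fun t _ => Continuous.intervalIntegrable (by fun_prop (disch := positivity)) _ _)
    (Filter.Eventually.of_forall fun t => mul_nonneg (rpow_nonneg hq0.le t) (log_nonneg hq))

lemma integral_rpow_eq_one_add_lintegral_meas_le [IsProbabilityMeasure μ] (hq : 1 ≤ q)
    (hf_nn : 0 ≤ᵐ[μ] f) (hf : AEMeasurable f μ) (hint : Integrable (fun x => q ^ f x) μ) :
    ∫ x, q ^ f x ∂μ
      = 1 + (∫⁻ t in Ioi 0, μ {x | t ≤ f x} * ENNReal.ofReal (q ^ t * log q)).toReal := by
  have hsub : 0 ≤ᵐ[μ] fun x => q ^ f x - 1 := by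
    filter_upwards [hf_nn] with x hx using sub_nonneg.2 (one_le_rpow hq hx)
  rw [← lintegral_ofReal_rpow_sub_one hq hf_nn hf,
    ← integral_eq_lintegral_of_nonneg_ae hsub (hint.sub (integrable_const 1)).aestronglyMeasurable,
    integral_sub hint (integrable_const 1)]
  simp

lemma ofReal_mul_rpow_neg_mul_ofReal_rpow_mul_log (hq : 1 ≤ q) (C t : ℝ) :
    ENNReal.ofReal (C * q ^ (-t)) * ENNReal.ofReal (q ^ t * log q)
      = ENNReal.ofReal (C * log q) := by
  have hq0 : 0 < q := zero_lt_one.trans_le hq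
  rw [← ENNReal.ofReal_mul' (mul_nonneg (rpow_nonneg hq0.le t) (log_nonneg hq)), rpow_neg hq0.le]
  congr 1
  field_simp

lemma lintegral_meas_le_mul_rpow_le {C N : ℝ} (hq : 1 ≤ q) (hC : 0 ≤ C) (hfN : ∀ x, f x ≤ N)
    (htail : ∀ t ∈ Ioc 0 N, μ {x | t ≤ f x} ≤ ENNReal.ofReal (C * q ^ (-t))) :
    ∫⁻ t in Ioi 0, μ {x | t ≤ f x} * ENNReal.ofReal (q ^ t * log q)
      ≤ ENNReal.ofReal (C * log q * N) := by
  calc ∫⁻ t in Ioi 0, μ {x | t ≤ f x} * ENNReal.ofReal (q ^ t * log q)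
      ≤ ∫⁻ t in Ioi 0, (Ioc 0 N).indicator (fun _ => ENNReal.ofReal (C * log q)) t := by
        refine setLIntegral_mono' measurableSet_Ioi fun t ht => ?_
        by_cases htN : t ≤ N
        · rw [indicator_of_mem (show t ∈ Ioc 0 N from ⟨ht, htN⟩),
            ← ofReal_mul_rpow_neg_mul_ofReal_rpow_mul_log hq C t]
          gcongr
          exact htail t ⟨ht, htN⟩
        · have hempty : {x | t ≤ f x} = ∅ :=
            eq_empty_of_forall_notMem fun x hx => htN (le_trans hx (hfN x))
          simp [hempty]
    _ ≤ ∫⁻ t, (Ioc 0 N).indicator (fun _ => ENNReal.ofReal (C * log q)) t :=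
        setLIntegral_le_lintegral _ _
    _ = ENNReal.ofReal (C * log q * N) := by
        rw [lintegral_indicator_const measurableSet_Ioc, Real.volume_Ioc, sub_zero,
          ENNReal.ofReal_mul (mul_nonneg hC (log_nonneg hq))]

lemma ofReal_le_lintegral_meas_le_mul_rpow {c M : ℝ} (hq : 1 ≤ q) (hc : 0 ≤ c)
    (htail : ∀ t ∈ Ioc 0 M, ENNReal.ofReal (c * q ^ (-t)) ≤ μ {x | t ≤ f x}) :
    ENNReal.ofReal (c * log q * M)
      ≤ ∫⁻ t in Ioi 0, μ {x | t ≤ f x} * ENNReal.ofReal (q ^ t * log q) := by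
  calc ENNReal.ofReal (c * log q * M) = ∫⁻ _ in Ioc 0 M, ENNReal.ofReal (c * log q) := by
        rw [setLIntegral_const, Real.volume_Ioc, sub_zero,
          ENNReal.ofReal_mul (mul_nonneg hc (log_nonneg hq))]
    _ ≤ ∫⁻ t in Ioc 0 M, μ {x | t ≤ f x} * ENNReal.ofReal (q ^ t * log q) := by
        refine setLIntegral_mono' measurableSet_Ioc fun t ht => ?_
        rw [← ofReal_mul_rpow_neg_mul_ofReal_rpow_mul_log hq c t]
        gcongr
        exact htail t ht
    _ ≤ _ := lintegral_mono_set Ioc_subset_Ioi_self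

lemma integrable_rpow_of_le [IsFiniteMeasure μ] {N : ℝ} (hq : 1 ≤ q) (hf : Measurable f)
    (hfN : ∀ x, f x ≤ N) : Integrable (fun x => q ^ f x) μ := by
  refine (integrable_const (q ^ N)).mono' (measurable_const.pow hf).aestronglyMeasurable
    (Filter.Eventually.of_forall fun x => ?_)
  rw [norm_of_nonneg (rpow_nonneg (by linarith) _)]
  exact rpow_le_rpow_of_exponent_le hq (hfN x)

variable [IsProbabilityMeasure μ]

lemma integral_rpow_le_one_add_mul {C N : ℝ} (hq : 1 ≤ q) (hC : 0 ≤ C) (hN : 0 ≤ N)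
    (hf_nn : ∀ x, 0 ≤ f x) (hf : Measurable f) (hfN : ∀ x, f x ≤ N)
    (htail : ∀ t ∈ Ioc 0 N, μ.real {x | t ≤ f x} ≤ C * q ^ (-t)) :
    ∫ x, q ^ f x ∂μ ≤ 1 + C * log q * N := by
  rw [integral_rpow_eq_one_add_lintegral_meas_le hq (Filter.Eventually.of_forall hf_nn)
    hf.aemeasurable (integrable_rpow_of_le hq hf hfN)]
  refine (add_le_add_iff_left 1).2 (ENNReal.toReal_le_of_le_ofReal
    (mul_nonneg (mul_nonneg hC (log_nonneg hq)) hN) ?_)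
  exact lintegral_meas_le_mul_rpow_le hq hC hfN fun t ht =>
    (ofReal_measureReal (measure_ne_top _ _)).symm.trans_le (ENNReal.ofReal_le_ofReal (htail t ht))

lemma max_one_add_mul_le_integral_rpow {c M : ℝ} (hq : 1 ≤ q) (hc : 0 ≤ c) (hf_nn : ∀ x, 0 ≤ f x)
    (hf : Measurable f) (hint : Integrable (fun x => q ^ f x) μ)
    (htail : ∀ t ∈ Ioc 0 M, c * q ^ (-t) ≤ μ.real {x | t ≤ f x}) :
    max 1 (1 + c * log q * M) ≤ ∫ x, q ^ f x ∂μ := by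
  have hf_nn' : 0 ≤ᵐ[μ] f := Filter.Eventually.of_forall hf_nn
  have hT_top : ∫⁻ x, ENNReal.ofReal (q ^ f x - 1) ∂μ ≠ ⊤ :=
    (hint.sub (integrable_const 1)).lintegral_lt_top.ne
  rw [lintegral_ofReal_rpow_sub_one hq hf_nn' hf.aemeasurable] at hT_top
  rw [integral_rpow_eq_one_add_lintegral_meas_le hq hf_nn' hf.aemeasurable hint]
  refine max_le (le_add_of_nonneg_right ENNReal.toReal_nonneg) ((add_le_add_iff_left 1).2 ?_)
  refine (ENNReal.ofReal_le_iff_le_toReal hT_top).1 (ofReal_le_lintegral_meas_le_mul_rpow hq hc ?_)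
  exact fun t ht =>
    (ENNReal.ofReal_le_ofReal (htail t ht)).trans_eq (ofReal_measureReal (measure_ne_top _ _))

end LayerCake

lemma min_one_div_mul_le_max_one_add {κ D N : ℝ} (hκ : 0 ≤ κ) (hD : 0 ≤ D) :
    min 1 κ / (D + 1) * (N + 1) ≤ max 1 (1 + κ * (N - D)) := by
  rw [div_mul_eq_mul_div, div_le_iff₀ (by positivity)]
  have hm1 : min 1 κ ≤ 1 := min_le_left _ _
  have hmκ : min 1 κ ≤ κ := min_le_right _ _
  have hm0 : 0 ≤ min 1 κ := le_min zero_le_one hκ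
  rcases le_total N D with hND | hDN
  · nlinarith [le_max_left 1 (1 + κ * (N - D))]
  -- `N + 1 ≤ (D + 1) * (N - D + 1)` when `D ≤ N`
  · nlinarith [le_max_right 1 (1 + κ * (N - D)), mul_nonneg hD (sub_nonneg.2 hDN),
      mul_nonneg hm0 (mul_nonneg hD (sub_nonneg.2 hDN))]

/-- Let `(X, ν)` be a probability space, `q > 1`, and `g : X → [0, N]` measurable.
If `ν{g ≥ t} ≤ C·q^{-t}` for all `t ≥ 0` and `ν{g ≥ t} ≥ c·q^{-t}` for all
`0 ≤ t ≤ N − D`, then `∫ q^g dν ≍ N + 1`, with constants depending only on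
`c, C, D, q`. -/
theorem integral_rpow_comparable_of_tail_bounds
    (q c C D : ℝ) (hq : 1 < q) (hc : 0 < c) (hC : 0 < C) (hD : 0 ≤ D) :
    ∃ c' C' : ℝ, 0 < c' ∧ 0 < C' ∧
      ∀ (X : Type) (_ : MeasurableSpace X) (ν : Measure X), IsProbabilityMeasure ν →
        ∀ (N : ℝ) (g : X → ℝ), 0 ≤ N → Measurable g →
          (∀ x, 0 ≤ g x ∧ g x ≤ N) →
          (∀ t : ℝ, 0 ≤ t → (ν {x | t ≤ g x}).toReal ≤ C * q ^ (-t)) →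
          (∀ t : ℝ, 0 ≤ t → t ≤ N - D → c * q ^ (-t) ≤ (ν {x | t ≤ g x}).toReal) →
          c' * (N + 1) ≤ ∫ x, q ^ (g x) ∂ν ∧ ∫ x, q ^ (g x) ∂ν ≤ C' * (N + 1) := by
  have hlog : 0 < log q := log_pos hq
  refine ⟨min 1 (c * log q) / (D + 1), 1 + C * log q, by positivity, by positivity, ?_⟩
  intro X _ ν _ N g hN hg hrange hup hlow
  have hint := integrable_rpow_of_le (μ := ν) hq.le hg fun x => (hrange x).2
  constructor
  · calc min 1 (c * log q) / (D + 1) * (N + 1) ≤ max 1 (1 + c * log q * (N - D)) :=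
          min_one_div_mul_le_max_one_add (by positivity) hD
      _ ≤ ∫ x, q ^ g x ∂ν := max_one_add_mul_le_integral_rpow hq.le hc.le (fun x => (hrange x).1)
          hg hint fun t ht => hlow t ht.1.le ht.2
  · calc ∫ x, q ^ g x ∂ν ≤ 1 + C * log q * N :=
          integral_rpow_le_one_add_mul hq.le hC.le hN (fun x => (hrange x).1) hg
            (fun x => (hrange x).2) fun t ht => hup t ht.1.le
      _ ≤ (1 + C * log q) * (N + 1) := by nlinarith [mul_nonneg hC.le hlog.le]
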